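/- Let H be a complex Hilbert space, A a bounded self-adjoint operator on H, and V a bounded nonnegative operator on H satisfying the maximality condition that the closed linear span of {(A−λ)⁻¹ V x : x ∈ H, λ ∈ ℂ, Im λ ≠ 0} equals H. Then the dissipative operator L = A + iV is completely nonself-adjoint; equivalently, if K ⊆ H is a closed subspace with A K ⊆ K and V x = 0 for every x ∈ K (so that L restricted to K is self-adjoint), then K = {0}. -/

import Mathlib

open MeasureTheory Complex Filter Topology Set ComplexConjugate
open scoped ComplexOrder

noncomputable section

/-- The closed linear span of `{(A−λ)⁻¹ V x : x ∈ H, Im λ ≠ 0}` is all of `H`. -/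
def ResolventMaximal {H : Type*} [NormedAddCommGroup H] [InnerProductSpace ℂ H]
    [CompleteSpace H] (A V : H →L[ℂ] H) : Prop :=
  (Submodule.span ℂ {y : H | ∃ (x : H) (lam : ℂ), lam.im ≠ 0 ∧
      y = Ring.inverse (A - lam • (1 : H →L[ℂ] H)) (V x)}).topologicalClosure = ⊤


/-!
Since `A` is self-adjoint, a closed `A`-invariant subspace `K` reduces `A`: `Kᗮ` is `A`-invariant
as well. Hence every `A - λ` preserves both summands of `H = K ⊕ Kᗮ`, and then so does its
inverse. As `V` is symmetric and vanishes on `K`, its range lies in `Kᗮ`, so every vector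
`(A - λ)⁻¹ V x` lies in the closed subspace `Kᗮ`. Maximality forces `Kᗮ = H`, i.e. `K = 0`.
-/

open Module.End

namespace ContinuousLinearMap

theorem ringInverse_mem_invtSubmodule {R M : Type*} [Ring R] [TopologicalSpace M]
    [AddCommGroup M] [IsTopologicalAddGroup M] [Module R M] {p q : Submodule R M}
    (hpq : IsCompl p q) {D : M →L[R] M} (hp : p ∈ invtSubmodule D.toLinearMap)
    (hq : q ∈ invtSubmodule D.toLinearMap) :
    q ∈ invtSubmodule (Ring.inverse D).toLinearMap := by
  by_cases hD : IsUnit D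
  swap
  · simp [Ring.inverse_non_unit _ hD, invtSubmodule.zero]
  intro y hy
  have hDE : D (Ring.inverse D y) = y := by
    simpa using congr($(Ring.mul_inverse_cancel D hD) y)
  have hED (z : M) : Ring.inverse D (D z) = z := by
    simpa using congr($(Ring.inverse_mul_cancel D hD) z)
  obtain ⟨a, ha, b, hb, hab⟩ :=
    Submodule.mem_sup.1 (hpq.sup_eq_top ▸ Submodule.mem_top (x := Ring.inverse D y))
  have hDa : D a = 0 := by
    refine Submodule.disjoint_def.1 hpq.disjoint _ (hp ha) ?_
    rw [show D a = y - D b by rw [← hDE, ← hab, map_add, add_sub_cancel_right]]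
    exact q.sub_mem hy (hq hb)
  have ha0 : a = 0 := by rw [← hED a, hDa, map_zero]
  change Ring.inverse D y ∈ q
  rwa [← hab, ha0, zero_add]

theorem isPositive_of_inner_self_nonneg {E : Type*} [NormedAddCommGroup E]
    [InnerProductSpace ℂ E] {T : E →L[ℂ] E} (hT : ∀ x, 0 ≤ inner ℂ (T x) x) : T.IsPositive :=
  (isPositive_iff T).2 ⟨(LinearMap.isSymmetric_iff_inner_map_self_real _).2 fun x ↦
    conj_eq_iff_im.2 (Complex.le_def.1 (hT x)).2.symm, hT⟩

end ContinuousLinearMap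

theorem IsSelfAdjoint.orthogonal_mem_invtSubmodule_ringInverse_sub_smul {𝕜 E : Type*}
    [RCLike 𝕜] [NormedAddCommGroup E] [InnerProductSpace 𝕜 E] [CompleteSpace E]
    {A : E →L[𝕜] E} (hA : IsSelfAdjoint A) {K : Submodule 𝕜 E} [K.HasOrthogonalProjection]
    (hK : K ∈ invtSubmodule A.toLinearMap) (μ : 𝕜) :
    Kᗮ ∈ invtSubmodule (Ring.inverse (A - μ • 1)).toLinearMap := by
  have hsub {p : Submodule 𝕜 E} (hp : p ∈ invtSubmodule A.toLinearMap) :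
      p ∈ invtSubmodule (A - μ • 1).toLinearMap := fun x hx ↦ by
    simpa using p.sub_mem (hp hx) (p.smul_mem μ hx)
  have hKperp : Kᗮ ∈ invtSubmodule A.toLinearMap :=
    ContinuousLinearMap.orthogonal_mem_invtSubmodule (by rwa [hA.adjoint_eq])
  exact ContinuousLinearMap.ringInverse_mem_invtSubmodule K.isCompl_orthogonal (hsub hK)
    (hsub hKperp)

/-- Let `A` be a bounded self-adjoint operator and `V` a bounded
nonnegative operator such that the closed linear span of `{(A−λ)⁻¹ V x : Im λ ≠ 0}` is all
of `H`.  Then the dissipative operator `L = A + iV` is completely nonself-adjoint: every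
closed subspace `K` with `A K ⊆ K` and `V|_K = 0` (so that `L|_K` is self-adjoint) is
trivial. -/
theorem completely_nonselfadjoint_of_resolventMaximal
    {H : Type*} [NormedAddCommGroup H] [InnerProductSpace ℂ H] [CompleteSpace H]
    (A V : H →L[ℂ] H) (hA : IsSelfAdjoint A)
    (hV : ∀ x : H, 0 ≤ (inner ℂ (V x) x : ℂ))
    (hmax : ResolventMaximal A V) :
    ∀ K : Submodule ℂ H, IsClosed (K : Set H) →
      (∀ x ∈ K, A x ∈ K) → (∀ x ∈ K, V x = 0) → K = ⊥ := by
  intro K hK hAK hVK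
  have := hK.completeSpace_coe
  have hrangeV : LinearMap.range V.toLinearMap ≤ Kᗮ :=
    Submodule.le_orthogonal_orthogonal _ |>.trans <| Submodule.orthogonal_le <|
      (ContinuousLinearMap.isPositive_of_inner_self_nonneg hV).isSymmetric.orthogonal_range ▸ hVK
  rw [← Submodule.orthogonal_eq_top_iff, eq_top_iff, ← hmax]
  refine Submodule.topologicalClosure_minimal _ (Submodule.span_le.2 ?_) K.isClosed_orthogonal
  rintro _ ⟨x, lam, -, rfl⟩
  exact hA.orthogonal_mem_invtSubmodule_ringInverse_sub_smul hAK lam (hrangeV ⟨x, rfl⟩)
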